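/- For every positive integer $l$ and every real $r$, $|J_l(r)| \le \frac{|r|^l}{2^l\, l!}$, where $J_l$ is the Bessel function of the first kind of order $l$. -/

import Mathlib

open Real MeasureTheory intervalIntegral

/-- The Bessel function of the first kind of integer order `l`,
`J_l(r) = (1/2π) ∫_{-π}^{π} cos(r sin x - l x) dx`. -/
noncomputable def besselJ (l : ℕ) (r : ℝ) : ℝ :=
  (1 / (2 * π)) * ∫ x in (-π)..π, Real.cos (r * Real.sin x - l * x)

/-- derivative of besselJ in `r` -/
noncomputable def besselJd (l : ℕ) (r : ℝ) : ℝ :=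
  (1 / (2 * π)) * ∫ x in (-π)..π,
    -Real.sin (r * Real.sin x - l * x) * Real.sin x

lemma bessel_hasDerivAt (l : ℕ) (r : ℝ) :
    HasDerivAt (besselJ l) (besselJd l r) r := by
  have key := intervalIntegral.hasDerivAt_integral_of_dominated_loc_of_deriv_le
    (F := fun y x => Real.cos (y * Real.sin x - l * x))
    (F' := fun y x => -Real.sin (y * Real.sin x - l * x) * Real.sin x)
    (x₀ := r) (a := -π) (b := π) (μ := volume) (bound := fun _ => 1)
    (Filter.univ_mem : (Set.univ : Set ℝ) ∈ nhds r)
    (Filter.Eventually.of_forall fun y =>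
      (Continuous.aestronglyMeasurable (by continuity)))
    ((Continuous.intervalIntegrable (by continuity) _ _))
    (Continuous.aestronglyMeasurable (by continuity))
    (Filter.Eventually.of_forall fun x _ y _ => by
      have h1 : |Real.sin (y * Real.sin x - l * x)| ≤ 1 := Real.abs_sin_le_one _
      have h2 : |Real.sin x| ≤ 1 := Real.abs_sin_le_one _
      calc ‖-Real.sin (y * Real.sin x - l * x) * Real.sin x‖
          = |Real.sin (y * Real.sin x - l * x)| * |Real.sin x| := by
            rw [Real.norm_eq_abs, abs_mul, abs_neg]
        _ ≤ 1 * 1 := mul_le_mul h1 h2 (abs_nonneg _) zero_le_one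
        _ = 1 := by ring)
    (intervalIntegrable_const)
    (Filter.Eventually.of_forall fun x _ y _ => by
      have h : HasDerivAt (fun y : ℝ => y * Real.sin x - l * x) (Real.sin x) y := by
        simpa using ((hasDerivAt_id y).mul_const (Real.sin x)).sub_const ((l : ℝ) * x)
      exact h.cos)
  exact key.2.const_mul _

lemma ftc_zero (c : ℕ) (r : ℝ) :
    (∫ x in (-π)..π, (r * Real.cos x - c) * Real.cos (r * Real.sin x - c * x)) = 0 := by
  have hderiv : ∀ x ∈ Set.uIcc (-π) π,
      HasDerivAt (fun x => Real.sin (r * Real.sin x - c * x))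
        ((r * Real.cos x - c) * Real.cos (r * Real.sin x - c * x)) x := by
    intro x _
    have h : HasDerivAt (fun x : ℝ => r * Real.sin x - c * x) (r * Real.cos x - c) x := by
      exact (((Real.hasDerivAt_sin x).const_mul r).sub ((hasDerivAt_id' x).const_mul (c : ℝ))).congr_deriv (by ring)
    simpa [mul_comm] using h.sin
  rw [intervalIntegral.integral_eq_sub_of_hasDerivAt hderiv
    (Continuous.intervalIntegrable (by continuity) _ _)]
  have h0 : Real.sin ((c : ℝ) * π) = 0 := Real.sin_nat_mul_pi c
  simp [mul_comm]
  rw [mul_comm π (c : ℝ), h0]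
  ring

lemma recurrence (l : ℕ) (r : ℝ) :
    r * besselJ l r = (l + 1) * besselJ (l + 1) r + r * besselJd (l + 1) r := by
  have hπ : (2 * π) ≠ 0 := by positivity
  have hA : IntervalIntegrable (fun x => Real.cos (r * Real.sin x - l * x)) volume (-π) π :=
    Continuous.intervalIntegrable (by continuity) _ _
  have hB : IntervalIntegrable (fun x => Real.cos (r * Real.sin x - (l + 1 : ℕ) * x))
      volume (-π) π := Continuous.intervalIntegrable (by continuity) _ _
  have hD : IntervalIntegrable
      (fun x => -Real.sin (r * Real.sin x - (l + 1 : ℕ) * x) * Real.sin x) volume (-π) π :=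
    Continuous.intervalIntegrable (by continuity) _ _
  have key := ftc_zero (l + 1) r
  have expand : ∀ x : ℝ,
      (r * Real.cos x - (l + 1 : ℕ)) * Real.cos (r * Real.sin x - (l + 1 : ℕ) * x)
      = r * Real.cos (r * Real.sin x - l * x)
        - (l + 1 : ℕ) * Real.cos (r * Real.sin x - (l + 1 : ℕ) * x)
        - r * (-Real.sin (r * Real.sin x - (l + 1 : ℕ) * x) * Real.sin x) := by
    intro x
    have hx : r * Real.sin x - l * x = (r * Real.sin x - (l + 1 : ℕ) * x) + x := by
      push_cast; ring
    rw [hx, Real.cos_add]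
    ring
  have hint : (∫ x in (-π)..π,
      (r * Real.cos x - (l + 1 : ℕ)) * Real.cos (r * Real.sin x - (l + 1 : ℕ) * x))
      = r * (∫ x in (-π)..π, Real.cos (r * Real.sin x - l * x))
        - (l + 1 : ℕ) * (∫ x in (-π)..π, Real.cos (r * Real.sin x - (l + 1 : ℕ) * x))
        - r * (∫ x in (-π)..π,
            -Real.sin (r * Real.sin x - (l + 1 : ℕ) * x) * Real.sin x) := by
    rw [← intervalIntegral.integral_const_mul, ← intervalIntegral.integral_const_mul,
      ← intervalIntegral.integral_const_mul, ← intervalIntegral.integral_sub (hA.const_mul r)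
        (hB.const_mul _), ← intervalIntegral.integral_sub
        (((hA.const_mul r)).sub (hB.const_mul _)) (hD.const_mul r)]
    exact intervalIntegral.integral_congr fun x _ => expand x
  rw [hint] at key
  unfold besselJ besselJd
  push_cast at key ⊢
  simp only [neg_mul, intervalIntegral.integral_neg] at key ⊢
  field_simp
  have e : (∫ x in (-π)..π, Real.sin x * Real.sin (r * Real.sin x - ((l:ℝ) + 1) * x)) = ∫ x in (-π)..π, Real.sin (r * Real.sin x - ((l:ℝ) + 1) * x) * Real.sin x := intervalIntegral.integral_congr fun x _ => mul_comm _ _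
  rw [e]
  linarith [key]

lemma bessel_continuous (l : ℕ) : Continuous (besselJ l) := by
  have h : Differentiable ℝ (besselJ l) := fun r => (bessel_hasDerivAt l r).differentiableAt
  exact h.continuous

lemma bessel_pow_hasDerivAt (l : ℕ) (r : ℝ) :
    HasDerivAt (fun r => r ^ (l + 1) * besselJ (l + 1) r) (r ^ (l + 1) * besselJ l r) r := by
  have h1 := (hasDerivAt_pow (l + 1) r).mul (bessel_hasDerivAt (l + 1) r)
  refine h1.congr_deriv (Eq.symm ?_)
  have hrec := recurrence l r
  have h2 : r ^ (l + 1) * besselJ l r = r ^ l * (r * besselJ l r) := by ring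
  rw [h2, hrec]
  push_cast [Nat.add_sub_cancel]
  ring

lemma bessel_integral (l : ℕ) (r : ℝ) :
    r ^ (l + 1) * besselJ (l + 1) r = ∫ t in (0:ℝ)..r, t ^ (l + 1) * besselJ l t := by
  rw [intervalIntegral.integral_eq_sub_of_hasDerivAt (fun t _ => bessel_pow_hasDerivAt l t)
    (((continuous_pow _).mul (bessel_continuous l)).intervalIntegrable _ _)]
  simp

lemma bessel_zero (l : ℕ) : besselJ (l + 1) 0 = 0 := by
  have h := recurrence l 0
  simp only [zero_mul, add_zero] at h
  have hl : ((l : ℝ) + 1) ≠ 0 := Nat.cast_add_one_ne_zero l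
  have := mul_eq_zero.mp h.symm
  rcases this with h' | h'
  · exact absurd h' hl
  · exact h'

lemma bessel_bound (l : ℕ) : ∀ r : ℝ, |besselJ l r| ≤ |r| ^ l / (2 ^ l * Nat.factorial l) := by
  induction l with
  | zero =>
    intro r
    simp only [pow_zero, Nat.factorial_zero, Nat.cast_one, mul_one, one_mul, div_one]
    unfold besselJ
    rw [abs_mul, abs_of_pos (show (0:ℝ) < 1 / (2 * π) by positivity)]
    have h2 : ‖∫ x in (-π)..π, Real.cos (r * Real.sin x - (0:ℕ) * x)‖ ≤ 1 * |π - (-π)| :=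
      intervalIntegral.norm_integral_le_of_norm_le_const fun x _ => by
        rw [Real.norm_eq_abs]; exact Real.abs_cos_le_one _
    rw [Real.norm_eq_abs] at h2
    have hpi : |π - (-π)| = 2 * π := by
      rw [sub_neg_eq_add, abs_of_pos (by positivity)]; ring
    rw [hpi, one_mul] at h2
    calc 1 / (2 * π) * |∫ x in (-π)..π, Real.cos (r * Real.sin x - (0:ℕ) * x)|
        ≤ 1 / (2 * π) * (2 * π) := by
          apply mul_le_mul_of_nonneg_left h2 (by positivity)
      _ = 1 := by field_simp
  | succ l ih =>
    intro r
    set C : ℝ := 2 ^ l * Nat.factorial l with hCdef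
    have hC : (0:ℝ) < C := by positivity
    set D : ℝ := 2 ^ (l + 1) * Nat.factorial (l + 1) with hDdef
    have hD : (0:ℝ) < D := by positivity
    rcases eq_or_ne r 0 with rfl | hr
    · simp [bessel_zero l]
    have hcont : Continuous fun t : ℝ => t ^ (l + 1) * besselJ l t :=
      (continuous_pow _).mul (bessel_continuous l)
    have hodd : Odd (2 * l + 1) := ⟨l, by ring⟩
    have hptw : ∀ t : ℝ, |t ^ (l + 1) * besselJ l t| ≤ |t| ^ (2 * l + 1) / C := by
      intro t
      rw [abs_mul, abs_pow]
      calc |t| ^ (l + 1) * |besselJ l t| ≤ |t| ^ (l + 1) * (|t| ^ l / C) :=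
            mul_le_mul_of_nonneg_left (ih t) (by positivity)
        _ = |t| ^ (2 * l + 1) / C := by field_simp; ring
    have hkey : |r ^ (l + 1) * besselJ (l + 1) r|
        ≤ |r| ^ (2 * l + 2) / ((2 * (l:ℝ) + 2) * C) := by
      rw [bessel_integral l r]
      have step1 : ‖∫ t in (0:ℝ)..r, t ^ (l + 1) * besselJ l t‖
          ≤ |∫ t in (0:ℝ)..r, ‖t ^ (l + 1) * besselJ l t‖| :=
        intervalIntegral.norm_integral_le_abs_integral_norm
      simp only [Real.norm_eq_abs] at step1
      refine step1.trans ?_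
      rcases le_total 0 r with h | h
      · have hnn : (0:ℝ) ≤ ∫ t in (0:ℝ)..r, |t ^ (l + 1) * besselJ l t| :=
          intervalIntegral.integral_nonneg h fun t _ => abs_nonneg _
        rw [abs_of_nonneg hnn]
        have mono : (∫ t in (0:ℝ)..r, |t ^ (l + 1) * besselJ l t|)
            ≤ ∫ t in (0:ℝ)..r, t ^ (2 * l + 1) / C := by
          apply intervalIntegral.integral_mono_on h
            (hcont.abs.intervalIntegrable _ _)
            (((continuous_pow _).div_const _).intervalIntegrable _ _)
          intro t ht
          calc |t ^ (l + 1) * besselJ l t| ≤ |t| ^ (2 * l + 1) / C := hptw t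
            _ = t ^ (2 * l + 1) / C := by rw [abs_of_nonneg ht.1]
        refine mono.trans ?_
        rw [intervalIntegral.integral_div, integral_pow, abs_of_nonneg h,
          zero_pow (by omega : 2 * l + 1 + 1 ≠ 0), sub_zero, div_div]
        apply le_of_eq
        push_cast
        ring_nf
      · have hsymm : (∫ t in (0:ℝ)..r, |t ^ (l + 1) * besselJ l t|)
            = -(∫ t in r..(0:ℝ), |t ^ (l + 1) * besselJ l t|) := by
          rw [intervalIntegral.integral_symm]
        rw [hsymm, abs_neg]
        have hnn : (0:ℝ) ≤ ∫ t in r..(0:ℝ), |t ^ (l + 1) * besselJ l t| :=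
          intervalIntegral.integral_nonneg h fun t _ => abs_nonneg _
        rw [abs_of_nonneg hnn]
        have mono : (∫ t in r..(0:ℝ), |t ^ (l + 1) * besselJ l t|)
            ≤ ∫ t in r..(0:ℝ), -(t ^ (2 * l + 1)) / C := by
          apply intervalIntegral.integral_mono_on h
            (hcont.abs.intervalIntegrable _ _)
            ((((continuous_pow _).neg).div_const _).intervalIntegrable _ _)
          intro t ht
          calc |t ^ (l + 1) * besselJ l t| ≤ |t| ^ (2 * l + 1) / C := hptw t
            _ = -(t ^ (2 * l + 1)) / C := by
                rw [abs_of_nonpos ht.2, hodd.neg_pow]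
        refine mono.trans ?_
        have : (∫ t in r..(0:ℝ), -(t ^ (2 * l + 1)) / C)
            = -((∫ t in r..(0:ℝ), t ^ (2 * l + 1)) / C) := by
          rw [← intervalIntegral.integral_div, ← intervalIntegral.integral_neg]
          exact intervalIntegral.integral_congr fun t _ => by ring
        rw [this, integral_pow, zero_pow (by omega : 2 * l + 1 + 1 ≠ 0), zero_sub]
        have heven : Even (2 * l + 2) := ⟨l + 1, by ring⟩
        rw [heven.pow_abs r]
        apply le_of_eq
        rw [neg_div, neg_div, neg_neg, div_div]
        push_cast
        ring_nf
    -- conclude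
    rw [abs_mul, abs_pow] at hkey
    have hrp : (0:ℝ) < |r| ^ (l + 1) := pow_pos (abs_pos.mpr hr) _
    have hDC : (2 * (l:ℝ) + 2) * C = D := by
      rw [hCdef, hDdef]
      push_cast [Nat.factorial_succ]
      ring
    have hkey2 : |r| ^ (l + 1) * |besselJ (l + 1) r|
        ≤ |r| ^ (l + 1) * (|r| ^ (l + 1) / D) := by
      refine hkey.trans (le_of_eq ?_)
      have hsplit : |r| ^ (2 * l + 2) = |r| ^ (l + 1) * |r| ^ (l + 1) := by ring
      rw [← hDC, hsplit, mul_div_assoc]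
    have := (mul_le_mul_iff_right₀ hrp).mp hkey2
    exact this

/-- For every positive integer `l` and real `r`, `|J_l(r)| ≤ |r|^l / (2^l l!)`. -/
theorem stmt13 (l : ℕ) (hl : 0 < l) (r : ℝ) :
    |besselJ l r| ≤ |r| ^ l / (2 ^ l * Nat.factorial l) := bessel_bound l r
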